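/- Max-reward stage cumulative bound (Lemma A.2): in a finite discounted MDP, let δ > 0, let R : S → A → ℝ be a reward signal, and let π_0, π_1, …, π_{n} be policies such that for every i < n: (π_i s a = 0 → π_{i+1} s a = 0), D̄_KL(π_{i+1}‖π_i) ≤ δ, and 𝔸_R(π_i, π_{i+1}) ≥ 0. Then J_R(π_n) − J_R(π_0) ≥ − (√(2δ) · γ / (1−γ)²) · ∑_{j=1}^{n} ε_R(π_{j−1}, π_j). -/

import Mathlib

open Real BigOperators

/-- Induced transition matrix of policy `pol`: `P_pol(s,s') = ∑ a, pol s a * P s a s'`. -/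
noncomputable def transMat {S A : Type*} [Fintype A] (P : S → A → S → ℝ)
    (pol : S → A → ℝ) : Matrix S S ℝ :=
  fun s s' => ∑ a, pol s a * P s a s'

/-- Discounted state visitation distribution
`d_pol(s) = (1-γ) ∑ₜ γ^t ∑_{s0} ρ0 s0 * (P_pol^t)(s0,s)`. -/
noncomputable def dVisit {S A : Type*} [Fintype S] [DecidableEq S] [Fintype A]
    (P : S → A → S → ℝ) (γ : ℝ) (ρ0 : S → ℝ) (pol : S → A → ℝ) (s : S) : ℝ :=
  (1 - γ) * ∑' t : ℕ, γ ^ t * ∑ s0, ρ0 s0 * (transMat P pol ^ t) s0 s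

/-- Value function of signal `F` under policy `pol`. -/
noncomputable def Vfun {S A : Type*} [Fintype S] [DecidableEq S] [Fintype A]
    (P : S → A → S → ℝ) (γ : ℝ) (F : S → A → ℝ) (pol : S → A → ℝ) (s : S) : ℝ :=
  ∑' t : ℕ, γ ^ t * ∑ s', (transMat P pol ^ t) s s' * ∑ a, pol s' a * F s' a

/-- Return `J_F(pol) = ∑ s, ρ0 s * V_F^pol(s)`. -/
noncomputable def Jret {S A : Type*} [Fintype S] [DecidableEq S] [Fintype A]
    (P : S → A → S → ℝ) (γ : ℝ) (ρ0 : S → ℝ) (F : S → A → ℝ) (pol : S → A → ℝ) : ℝ :=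
  ∑ s, ρ0 s * Vfun P γ F pol s

/-- Action-value function `Q_F^pol(s,a) = F s a + γ ∑_{s'} P s a s' * V_F^pol(s')`. -/
noncomputable def Qfun {S A : Type*} [Fintype S] [DecidableEq S] [Fintype A]
    (P : S → A → S → ℝ) (γ : ℝ) (F : S → A → ℝ) (pol : S → A → ℝ) (s : S) (a : A) : ℝ :=
  F s a + γ * ∑ s', P s a s' * Vfun P γ F pol s'

/-- Advantage function `A_F^pol(s,a) = Q_F^pol(s,a) - V_F^pol(s)`. -/
noncomputable def Adv {S A : Type*} [Fintype S] [DecidableEq S] [Fintype A]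
    (P : S → A → S → ℝ) (γ : ℝ) (F : S → A → ℝ) (pol : S → A → ℝ) (s : S) (a : A) : ℝ :=
  Qfun P γ F pol s a - Vfun P γ F pol s

/-- Expected surrogate advantage
`𝔸_F(pol,pol') = ∑ s, d_pol(s) ∑ a, pol' s a * A_F^pol(s,a)`. -/
noncomputable def surrAdv {S A : Type*} [Fintype S] [DecidableEq S] [Fintype A]
    (P : S → A → S → ℝ) (γ : ℝ) (ρ0 : S → ℝ) (F : S → A → ℝ)
    (pol pol' : S → A → ℝ) : ℝ :=
  ∑ s, dVisit P γ ρ0 pol s * ∑ a, pol' s a * Adv P γ F pol s a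

/-- `ε_F(pol,pol') = max_s |∑ a, pol' s a * A_F^pol(s,a)|`. -/
noncomputable def epsAdv {S A : Type*} [Fintype S] [DecidableEq S] [Fintype A] [Nonempty S]
    (P : S → A → S → ℝ) (γ : ℝ) (F : S → A → ℝ) (pol pol' : S → A → ℝ) : ℝ :=
  Finset.univ.sup' Finset.univ_nonempty fun s => |∑ a, pol' s a * Adv P γ F pol s a|

/-- Per-state KL divergence `KL(pol'‖pol)(s) = ∑ a, pol' s a * log (pol' s a / pol s a)`
(with the convention `0 * log 0 = 0`, automatic since `Real.log 0 = 0`). -/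
noncomputable def klState {S A : Type*} [Fintype A] (pol' pol : S → A → ℝ) (s : S) : ℝ :=
  ∑ a, pol' s a * Real.log (pol' s a / pol s a)

/-- Averaged KL divergence `D̄_KL(pol'‖pol) = ∑ s, d_pol(s) * KL(pol'‖pol)(s)`. -/
noncomputable def avgKL {S A : Type*} [Fintype S] [DecidableEq S] [Fintype A]
    (P : S → A → S → ℝ) (γ : ℝ) (ρ0 : S → ℝ) (pol' pol : S → A → ℝ) : ℝ :=
  ∑ s, dVisit P γ ρ0 pol s * klState pol' pol s

/-!
Bound each stage `π → π'` and sum telescopically. The performance-difference identity gives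
`(1 - γ) (J(π') - J(π)) = ∑ s, d_{π'}(s) g(s)` with `g(s) = ∑ a, π'(s,a) A^π(s,a)`; the
`d_π`-average of `g` is the surrogate advantage `𝔸 ≥ 0` and `|g| ≤ ε`, so the loss is at most
`ε ‖d_{π'} - d_π‖₁`. Since `d_π = (1 - γ) ρ₀ (1 - γ P_π)⁻¹`, the resolvent identity gives
`d_{π'} - d_π = γ d_π (P_{π'} - P_π) (1 - γ P_{π'})⁻¹`, hence
`‖d_{π'} - d_π‖₁ ≤ γ / (1 - γ) · E_{d_π} ‖π'(s) - π(s)‖₁`, and Pinsker's inequality with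
Cauchy–Schwarz bounds this average by `√(2 D̄_KL) ≤ √(2δ)`. Pinsker itself follows from the
pointwise bound `3 (t - 1)² ≤ 2 (t + 2) (t log t - t + 1)` and Cauchy–Schwarz with weights `p + 2q`.
-/

open Set Matrix

lemma nonneg_of_hasDerivAt_sign {f f' : ℝ → ℝ} (hf : ∀ t, 0 < t → HasDerivAt f (f' t) t)
    (hf1 : f 1 = 0) (hneg : ∀ t ∈ Ioo (0 : ℝ) 1, f' t ≤ 0) (hpos : ∀ t, 1 < t → 0 ≤ f' t)
    {t : ℝ} (ht : 0 < t) : 0 ≤ f t := by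
  have hcont : ContinuousOn f (Ioi 0) := fun x hx => (hf x hx).continuousAt.continuousWithinAt
  rcases le_total 1 t with h1 | h1
  · have hmono : MonotoneOn f (Ici 1) :=
      monotoneOn_of_hasDerivWithinAt_nonneg (convex_Ici 1)
        (hcont.mono fun x (hx : 1 ≤ x) => zero_lt_one.trans_le hx)
        (fun x hx => (hf x (zero_lt_one.trans (by rwa [interior_Ici] at hx))).hasDerivWithinAt)
        (fun x hx => hpos x (by rwa [interior_Ici] at hx))
    simpa [hf1] using hmono (le_refl (1:ℝ)) h1 h1
  · have hanti : AntitoneOn f (Ioc 0 1) :=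
      antitoneOn_of_hasDerivWithinAt_nonpos (convex_Ioc 0 1) (hcont.mono Ioc_subset_Ioi_self)
        (fun x hx => (hf x (by rw [interior_Ioc] at hx; exact hx.1)).hasDerivWithinAt)
        (fun x hx => hneg x (by rwa [interior_Ioc] at hx))
    simpa [hf1] using hanti ⟨ht, h1⟩ ⟨one_pos, le_rfl⟩ h1

lemma monotoneOn_add_one_mul_log_sub :
    MonotoneOn (fun t => (t + 1) * log t - 2 * (t - 1)) (Ioi 0) := by
  have hderiv : ∀ t : ℝ, 0 < t →
      HasDerivAt (fun t => (t + 1) * log t - 2 * (t - 1)) (log t - (1 - t⁻¹)) t := fun t ht =>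
    ((((hasDerivAt_id' t).add_const 1).mul (hasDerivAt_log ht.ne')).sub
      (((hasDerivAt_id' t).sub_const 1).const_mul 2)).congr_deriv (by field_simp; ring)
  refine monotoneOn_of_hasDerivWithinAt_nonneg (f' := fun t => log t - (1 - t⁻¹))
    (convex_Ioi 0) (fun t ht => (hderiv t ht).continuousAt.continuousWithinAt)
    (fun t ht => ?_) (fun t ht => ?_)
  all_goals rw [interior_Ioi] at ht
  · exact (hderiv t ht).hasDerivWithinAt
  · exact sub_nonneg.2 (one_sub_inv_le_log_of_pos ht)

lemma sq_sub_one_le_mul_log_sub_add {t : ℝ} (ht : 0 ≤ t) :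
    3 * (t - 1) ^ 2 ≤ 2 * (t + 2) * (t * log t - t + 1) := by
  rcases ht.eq_or_lt with rfl | ht
  · norm_num
  have hderiv : ∀ t : ℝ, 0 < t → HasDerivAt
      (fun t => 2 * (t + 2) * (t * log t - t + 1) - 3 * (t - 1) ^ 2)
      (4 * ((t + 1) * log t - 2 * (t - 1))) t := fun t ht =>
    (((((hasDerivAt_id' t).add_const 2).const_mul 2).mul ((((hasDerivAt_id' t).mul
      (hasDerivAt_log ht.ne')).sub (hasDerivAt_id' t)).add_const 1)).sub
      ((((hasDerivAt_id' t).sub_const 1).pow 2).const_mul 3)).congr_deriv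
      (by simp only [Pi.mul_apply, Pi.sub_apply]; field_simp; ring)
  have key := nonneg_of_hasDerivAt_sign hderiv (by norm_num)
    (fun s hs => by
      have := monotoneOn_add_one_mul_log_sub hs.1 (mem_Ioi.2 one_pos) hs.2.le
      norm_num at this; linarith)
    (fun s hs => by
      have := monotoneOn_add_one_mul_log_sub (mem_Ioi.2 one_pos)
        (zero_lt_one.trans hs) hs.le
      norm_num at this; linarith) ht
  linarith

lemma sub_le_mul_log_div {x y : ℝ} (hx : 0 ≤ x) (hy : 0 ≤ y) (hxy : y = 0 → x = 0) :
    x - y ≤ x * log (x / y) := by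
  rcases hx.eq_or_lt with rfl | hx
  · simpa using hy
  have hy : 0 < y := hy.lt_of_ne fun h => hx.ne' (hxy h.symm)
  have := one_sub_inv_le_log_of_pos (div_pos hx hy)
  rw [inv_div] at this
  calc x - y = x * (1 - y / x) := by field_simp
    _ ≤ x * log (x / y) := mul_le_mul_of_nonneg_left this hx.le

lemma sq_sub_le_mul_log_div {x y : ℝ} (hx : 0 ≤ x) (hy : 0 ≤ y) (hxy : y = 0 → x = 0) :
    3 * (x - y) ^ 2 ≤ 2 * (x + 2 * y) * (x * log (x / y) - x + y) := by
  rcases hy.eq_or_lt with rfl | hy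
  · simp [hxy rfl]
  calc 3 * (x - y) ^ 2 = y ^ 2 * (3 * (x / y - 1) ^ 2) := by field_simp
    _ ≤ y ^ 2 * (2 * (x / y + 2) * (x / y * log (x / y) - x / y + 1)) :=
      mul_le_mul_of_nonneg_left (sq_sub_one_le_mul_log_sub_add (div_nonneg hx hy.le))
        (sq_nonneg y)
    _ = 2 * (x + 2 * y) * (x * log (x / y) - x + y) := by field_simp

theorem sq_sum_abs_sub_le_two_mul_sum_mul_log_div {α : Type*} [Fintype α] {p q : α → ℝ}
    (hp : ∀ a, 0 ≤ p a) (hq : ∀ a, 0 ≤ q a) (hp1 : ∑ a, p a = 1) (hq1 : ∑ a, q a = 1)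
    (hpq : ∀ a, q a = 0 → p a = 0) :
    (∑ a, |p a - q a|) ^ 2 ≤ 2 * ∑ a, p a * log (p a / q a) := by
  have hcs := Finset.sum_sq_le_sum_mul_sum_of_sq_le_mul Finset.univ
    (r := fun a => |p a - q a|) (f := fun a => p a + 2 * q a)
    (g := fun a => 2 / 3 * (p a * log (p a / q a) - p a + q a))
    (fun a _ => by linarith [hp a, hq a])
    (fun a _ => by linarith [sub_le_mul_log_div (hp a) (hq a) (hpq a)])
    (fun a _ => by rw [sq_abs]; linarith [sq_sub_le_mul_log_div (hp a) (hq a) (hpq a)])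
  have hsum : ∑ a, (p a + 2 * q a) = 3 := by
    rw [Finset.sum_add_distrib, ← Finset.mul_sum, hp1, hq1]; norm_num
  simp only [hsum, ← Finset.mul_sum, Finset.sum_add_distrib, Finset.sum_sub_distrib, hp1,
    hq1] at hcs
  linarith

namespace Matrix

variable {n : Type*} [Fintype n]

lemma sum_abs_vecMul_le {m : Type*} [Fintype m] (x : m → ℝ) (N : Matrix m n ℝ) :
    ∑ j, |(x ᵥ* N) j| ≤ ∑ i, |x i| * ∑ j, |N i j| := by
  simp only [vecMul, dotProduct, Finset.mul_sum, ← abs_mul]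
  rw [Finset.sum_comm]
  exact Finset.sum_le_sum fun j _ => Finset.abs_sum_le_sum_abs _ _

variable [DecidableEq n] {γ : ℝ} {Q Q' : Matrix n n ℝ}

lemma sum_abs_vecMul_le_of_mem_rowStochastic {N : Matrix n n ℝ} (hN : N ∈ rowStochastic ℝ n)
    (x : n → ℝ) : ∑ j, |(x ᵥ* N) j| ≤ ∑ i, |x i| := by
  refine (sum_abs_vecMul_le x N).trans_eq (Finset.sum_congr rfl fun i _ => ?_)
  rw [Finset.sum_congr rfl fun j _ => abs_of_nonneg (nonneg_of_mem_rowStochastic hN),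
    sum_row_of_mem_rowStochastic hN, mul_one]

noncomputable def discountedKernel (γ : ℝ) (Q : Matrix n n ℝ) : Matrix n n ℝ :=
  ∑' t : ℕ, γ ^ t • Q ^ t

lemma summable_discounted_pow_apply (hQ : Q ∈ rowStochastic ℝ n) (hγ0 : 0 ≤ γ) (hγ1 : γ < 1)
    (i j : n) : Summable fun t : ℕ => γ ^ t * (Q ^ t) i j :=
  Summable.of_nonneg_of_le
    (fun t => mul_nonneg (pow_nonneg hγ0 t) (nonneg_of_mem_rowStochastic (pow_mem hQ t)))
    (fun t => mul_le_of_le_one_right (pow_nonneg hγ0 t)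
      (le_one_of_mem_rowStochastic (pow_mem hQ t)))
    (summable_geometric_of_lt_one hγ0 hγ1)

lemma summable_discounted_pow (hQ : Q ∈ rowStochastic ℝ n) (hγ0 : 0 ≤ γ) (hγ1 : γ < 1) :
    Summable fun t : ℕ => γ ^ t • Q ^ t :=
  Pi.summable.2 fun i => Pi.summable.2 fun j => summable_discounted_pow_apply hQ hγ0 hγ1 i j

lemma discountedKernel_apply (hQ : Q ∈ rowStochastic ℝ n) (hγ0 : 0 ≤ γ) (hγ1 : γ < 1)
    (i j : n) : discountedKernel γ Q i j = ∑' t : ℕ, γ ^ t * (Q ^ t) i j := by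
  have hs := summable_discounted_pow hQ hγ0 hγ1
  calc discountedKernel γ Q i j = (∑' t : ℕ, (γ ^ t • Q ^ t) i) j :=
        congrFun (tsum_apply hs) j
    _ = ∑' t : ℕ, γ ^ t * (Q ^ t) i j := tsum_apply (Pi.summable.1 hs i)

lemma discountedKernel_eq_one_add_smul_mul (hQ : Q ∈ rowStochastic ℝ n) (hγ0 : 0 ≤ γ)
    (hγ1 : γ < 1) :
    discountedKernel γ Q = 1 + (γ • Q) * discountedKernel γ Q := by
  have hs := summable_discounted_pow hQ hγ0 hγ1
  calc discountedKernel γ Q = γ ^ 0 • Q ^ 0 + ∑' t : ℕ, γ ^ (t + 1) • Q ^ (t + 1) :=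
        hs.tsum_eq_zero_add
    _ = 1 + (γ • Q) * discountedKernel γ Q := by
        simp only [discountedKernel, ← hs.tsum_mul_left, smul_mul_smul, ← pow_succ', pow_zero,
          one_smul]

lemma discountedKernel_eq_one_add_mul_smul (hQ : Q ∈ rowStochastic ℝ n) (hγ0 : 0 ≤ γ)
    (hγ1 : γ < 1) :
    discountedKernel γ Q = 1 + discountedKernel γ Q * (γ • Q) := by
  have hs := summable_discounted_pow hQ hγ0 hγ1
  calc discountedKernel γ Q = γ ^ 0 • Q ^ 0 + ∑' t : ℕ, γ ^ (t + 1) • Q ^ (t + 1) :=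
        hs.tsum_eq_zero_add
    _ = 1 + discountedKernel γ Q * (γ • Q) := by
        simp only [discountedKernel, ← hs.tsum_mul_right, smul_mul_smul, ← pow_succ, pow_zero,
          one_smul]

lemma one_sub_smul_mul_discountedKernel (hQ : Q ∈ rowStochastic ℝ n) (hγ0 : 0 ≤ γ)
    (hγ1 : γ < 1) : (1 - γ • Q) * discountedKernel γ Q = 1 := by
  conv_rhs => rw [← add_sub_cancel_right 1 ((γ • Q) * discountedKernel γ Q),
    ← discountedKernel_eq_one_add_smul_mul hQ hγ0 hγ1]
  rw [sub_mul, one_mul]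

lemma discountedKernel_mul_one_sub_smul (hQ : Q ∈ rowStochastic ℝ n) (hγ0 : 0 ≤ γ)
    (hγ1 : γ < 1) : discountedKernel γ Q * (1 - γ • Q) = 1 := by
  conv_rhs => rw [← add_sub_cancel_right 1 (discountedKernel γ Q * (γ • Q)),
    ← discountedKernel_eq_one_add_mul_smul hQ hγ0 hγ1]
  rw [mul_sub, mul_one]

lemma discountedKernel_nonneg (hQ : Q ∈ rowStochastic ℝ n) (hγ0 : 0 ≤ γ) (hγ1 : γ < 1)
    (i j : n) : 0 ≤ discountedKernel γ Q i j := by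
  rw [discountedKernel_apply hQ hγ0 hγ1]
  exact tsum_nonneg fun t =>
    mul_nonneg (pow_nonneg hγ0 t) (nonneg_of_mem_rowStochastic (pow_mem hQ t))

lemma smul_discountedKernel_mem_rowStochastic (hQ : Q ∈ rowStochastic ℝ n) (hγ0 : 0 ≤ γ)
    (hγ1 : γ < 1) : (1 - γ) • discountedKernel γ Q ∈ rowStochastic ℝ n := by
  refine mem_rowStochastic.2 ⟨fun i j => ?_, ?_⟩
  · exact mul_nonneg (sub_nonneg.2 hγ1.le) (discountedKernel_nonneg hQ hγ0 hγ1 i j)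
  · have h : (1 - γ • Q) *ᵥ 1 = (1 - γ) • (1 : n → ℝ) := by
      rw [sub_mulVec, one_mulVec, smul_mulVec, one_vecMul_of_mem_rowStochastic hQ, sub_smul,
        one_smul]
    rw [smul_mulVec, ← mulVec_smul, ← h, mulVec_mulVec,
      discountedKernel_mul_one_sub_smul hQ hγ0 hγ1, one_mulVec]

lemma discountedKernel_sub_discountedKernel (hQ : Q ∈ rowStochastic ℝ n)
    (hQ' : Q' ∈ rowStochastic ℝ n) (hγ0 : 0 ≤ γ) (hγ1 : γ < 1) :
    discountedKernel γ Q' - discountedKernel γ Q =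
      γ • (discountedKernel γ Q * (Q' - Q) * discountedKernel γ Q') := by
  set K := discountedKernel γ Q
  set K' := discountedKernel γ Q'
  calc K' - K = K * (1 - γ • Q) * K' - K * ((1 - γ • Q') * K') := by
        rw [discountedKernel_mul_one_sub_smul hQ hγ0 hγ1,
          one_sub_smul_mul_discountedKernel hQ' hγ0 hγ1, one_mul, mul_one]
    _ = γ • (K * (Q' - Q) * K') := by
        simp only [mul_sub, sub_mul, mul_one, Matrix.one_mul, mul_smul_comm, smul_mul_assoc,
          smul_sub, Matrix.mul_assoc]
        abel

end Matrix

section MDP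

variable {S A : Type*} [Fintype S] [Fintype A] {P : S → A → S → ℝ} {pol pol' : S → A → ℝ}

def policyAvg (F pol : S → A → ℝ) (s : S) : ℝ :=
  ∑ a, pol s a * F s a

lemma sum_mul_sum_abs_sub_le_sqrt {w : S → ℝ} (hw : w ∈ stdSimplex ℝ S)
    (hpol : ∀ s, pol s ∈ stdSimplex ℝ A) (hpol' : ∀ s, pol' s ∈ stdSimplex ℝ A)
    (habs : ∀ s a, pol s a = 0 → pol' s a = 0) :
    ∑ s, w s * ∑ a, |pol' s a - pol s a| ≤ √(2 * ∑ s, w s * klState pol' pol s) := by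
  set tv := fun s => ∑ a, |pol' s a - pol s a|
  have hcs : (∑ s, w s * tv s) ^ 2 ≤ (∑ s, w s) * ∑ s, w s * tv s ^ 2 :=
    Finset.sum_sq_le_sum_mul_sum_of_sq_le_mul _ (fun s _ => hw.1 s)
      (fun s _ => mul_nonneg (hw.1 s) (sq_nonneg _)) (fun s _ => le_of_eq (by ring))
  have hpinsker : ∑ s, w s * tv s ^ 2 ≤ 2 * ∑ s, w s * klState pol' pol s := by
    rw [Finset.mul_sum]
    refine Finset.sum_le_sum fun s _ => ?_
    have := sq_sum_abs_sub_le_two_mul_sum_mul_log_div (hpol' s).1 (hpol s).1 (hpol' s).2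
      (hpol s).2 (habs s)
    calc w s * tv s ^ 2 ≤ w s * (2 * klState pol' pol s) :=
          mul_le_mul_of_nonneg_left this (hw.1 s)
      _ = 2 * (w s * klState pol' pol s) := by ring
  rw [hw.2, one_mul] at hcs
  exact (le_abs_self _).trans (Real.abs_le_sqrt (hcs.trans hpinsker))

lemma sum_abs_transMat_sub_le (hP : ∀ s a, P s a ∈ stdSimplex ℝ S) (s : S) :
    ∑ s', |(transMat P pol' - transMat P pol) s s'| ≤ ∑ a, |pol' s a - pol s a| := by
  have hrow : (transMat P pol' - transMat P pol) s = (pol' s - pol s) ᵥ* P s := by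
    ext s'
    simp [transMat, vecMul, dotProduct, sub_mul]
  rw [hrow]
  refine (sum_abs_vecMul_le _ _).trans_eq (Finset.sum_congr rfl fun a _ => ?_)
  rw [Finset.sum_congr rfl fun s' _ => abs_of_nonneg ((hP s a).1 s'), (hP s a).2, mul_one,
    Pi.sub_apply]

variable [DecidableEq S] {γ : ℝ}

lemma transMat_mem_rowStochastic (hP : ∀ s a, P s a ∈ stdSimplex ℝ S)
    (hpol : ∀ s, pol s ∈ stdSimplex ℝ A) : transMat P pol ∈ rowStochastic ℝ S := by
  refine mem_rowStochastic_iff_sum.2 ⟨fun s s' => ?_, fun s => ?_⟩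
  · exact Finset.sum_nonneg fun a _ => mul_nonneg ((hpol s).1 a) ((hP s a).1 s')
  · simp only [transMat]
    rw [Finset.sum_comm]
    simp [← Finset.mul_sum, (hP _ _).2, (hpol s).2]

lemma Vfun_eq_mulVec (hP : ∀ s a, P s a ∈ stdSimplex ℝ S) (hpol : ∀ s, pol s ∈ stdSimplex ℝ A)
    (hγ0 : 0 ≤ γ) (hγ1 : γ < 1) (F : S → A → ℝ) :
    Vfun P γ F pol = discountedKernel γ (transMat P pol) *ᵥ policyAvg F pol := by
  have hQ := transMat_mem_rowStochastic hP hpol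
  funext s
  simp only [Vfun, mulVec, dotProduct, discountedKernel_apply hQ hγ0 hγ1, ← tsum_mul_right]
  rw [← Summable.tsum_finsetSum fun s' _ =>
    (summable_discounted_pow_apply hQ hγ0 hγ1 s s').mul_right _]
  simp only [Finset.mul_sum, mul_assoc, policyAvg]

lemma dVisit_eq_vecMul (hP : ∀ s a, P s a ∈ stdSimplex ℝ S) (hpol : ∀ s, pol s ∈ stdSimplex ℝ A)
    (hγ0 : 0 ≤ γ) (hγ1 : γ < 1) (ρ0 : S → ℝ) :
    dVisit P γ ρ0 pol = ρ0 ᵥ* ((1 - γ) • discountedKernel γ (transMat P pol)) := by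
  have hQ := transMat_mem_rowStochastic hP hpol
  funext s
  rw [vecMul_smul, Pi.smul_apply, smul_eq_mul, dVisit]
  congr 1
  simp only [vecMul, dotProduct, discountedKernel_apply hQ hγ0 hγ1, ← tsum_mul_left]
  rw [← Summable.tsum_finsetSum fun s' _ =>
    (summable_discounted_pow_apply hQ hγ0 hγ1 s' s).mul_left _]
  simp only [Finset.mul_sum, mul_left_comm]

lemma dVisit_mem_stdSimplex (hP : ∀ s a, P s a ∈ stdSimplex ℝ S)
    (hpol : ∀ s, pol s ∈ stdSimplex ℝ A) (hγ0 : 0 ≤ γ) (hγ1 : γ < 1) {ρ0 : S → ℝ}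
    (hρ : ρ0 ∈ stdSimplex ℝ S) : dVisit P γ ρ0 pol ∈ stdSimplex ℝ S := by
  have hK := smul_discountedKernel_mem_rowStochastic (transMat_mem_rowStochastic hP hpol) hγ0 hγ1
  rw [dVisit_eq_vecMul hP hpol hγ0 hγ1]
  refine ⟨nonneg_vecMul_of_mem_rowStochastic hK hρ.1, ?_⟩
  have h := vecMul_dotProduct_one_eq_one_rowStochastic hK (by simpa [dotProduct] using hρ.2)
  simpa [dotProduct] using h

lemma policyAvg_Adv (hpol' : ∀ s, pol' s ∈ stdSimplex ℝ A) (F : S → A → ℝ) :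
    policyAvg (Adv P γ F pol) pol' =
      policyAvg F pol' + γ • (transMat P pol' *ᵥ Vfun P γ F pol) - Vfun P γ F pol := by
  funext s
  simp only [policyAvg, Adv, Qfun, mul_sub, mul_add, Finset.sum_sub_distrib,
    Finset.sum_add_distrib, ← Finset.sum_mul, (hpol' s).2, one_mul, Pi.sub_apply, Pi.add_apply,
    Pi.smul_apply, smul_eq_mul, mulVec, dotProduct, transMat, Finset.mul_sum]
  congr 2
  rw [Finset.sum_comm]
  simp only [Finset.sum_mul, Finset.mul_sum]
  exact Finset.sum_congr rfl fun _ _ => Finset.sum_congr rfl fun _ _ => by ring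

theorem performance_difference (hP : ∀ s a, P s a ∈ stdSimplex ℝ S)
    (hpol' : ∀ s, pol' s ∈ stdSimplex ℝ A)
    (hγ0 : 0 ≤ γ) (hγ1 : γ < 1) (ρ0 : S → ℝ) (F : S → A → ℝ) :
    (1 - γ) * (Jret P γ ρ0 F pol' - Jret P γ ρ0 F pol) =
      dVisit P γ ρ0 pol' ⬝ᵥ policyAvg (Adv P γ F pol) pol' := by
  have hQ' := transMat_mem_rowStochastic hP hpol'
  set K' := discountedKernel γ (transMat P pol')
  set V := Vfun P γ F pol
  have hg : policyAvg (Adv P γ F pol) pol' =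
      policyAvg F pol' - (1 - γ • transMat P pol') *ᵥ V := by
    rw [policyAvg_Adv hpol', sub_mulVec, one_mulVec, smul_mulVec]
    abel
  have hK'g : K' *ᵥ policyAvg (Adv P γ F pol) pol' = Vfun P γ F pol' - V := by
    rw [hg, mulVec_sub, mulVec_mulVec, discountedKernel_mul_one_sub_smul hQ' hγ0 hγ1,
      one_mulVec, Vfun_eq_mulVec hP hpol' hγ0 hγ1]
  rw [dVisit_eq_vecMul hP hpol' hγ0 hγ1, ← dotProduct_mulVec, smul_mulVec, dotProduct_smul,
    hK'g, dotProduct_sub, Jret, Jret, smul_eq_mul]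
  rfl

lemma dVisit_sub_dVisit (hP : ∀ s a, P s a ∈ stdSimplex ℝ S)
    (hpol : ∀ s, pol s ∈ stdSimplex ℝ A) (hpol' : ∀ s, pol' s ∈ stdSimplex ℝ A)
    (hγ0 : 0 ≤ γ) (hγ1 : γ < 1) (ρ0 : S → ℝ) :
    dVisit P γ ρ0 pol' - dVisit P γ ρ0 pol =
      γ • (dVisit P γ ρ0 pol ᵥ* (transMat P pol' - transMat P pol) ᵥ*
        discountedKernel γ (transMat P pol')) := by
  have hQ := transMat_mem_rowStochastic hP hpol
  have hQ' := transMat_mem_rowStochastic hP hpol'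
  rw [dVisit_eq_vecMul hP hpol' hγ0 hγ1, dVisit_eq_vecMul hP hpol hγ0 hγ1, ← vecMul_sub,
    ← smul_sub, discountedKernel_sub_discountedKernel hQ hQ' hγ0 hγ1, vecMul_vecMul,
    vecMul_vecMul, vecMul_smul, vecMul_smul, Matrix.smul_mul, vecMul_smul, smul_comm,
    Matrix.mul_assoc]

lemma sum_abs_dVisit_sub_le (hP : ∀ s a, P s a ∈ stdSimplex ℝ S)
    (hpol : ∀ s, pol s ∈ stdSimplex ℝ A) (hpol' : ∀ s, pol' s ∈ stdSimplex ℝ A)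
    (hγ0 : 0 ≤ γ) (hγ1 : γ < 1) {ρ0 : S → ℝ} (hρ : ρ0 ∈ stdSimplex ℝ S) :
    ∑ s, |dVisit P γ ρ0 pol' s - dVisit P γ ρ0 pol s| ≤
      γ / (1 - γ) * ∑ s, dVisit P γ ρ0 pol s * ∑ a, |pol' s a - pol s a| := by
  have hγ : 0 < 1 - γ := sub_pos.2 hγ1
  set d := dVisit P γ ρ0 pol
  set x := d ᵥ* (transMat P pol' - transMat P pol)
  set N := (1 - γ) • discountedKernel γ (transMat P pol')
  have hN : N ∈ rowStochastic ℝ S :=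
    smul_discountedKernel_mem_rowStochastic (transMat_mem_rowStochastic hP hpol') hγ0 hγ1
  have hdiff : dVisit P γ ρ0 pol' - d = (γ / (1 - γ)) • (x ᵥ* N) := by
    rw [dVisit_sub_dVisit hP hpol hpol' hγ0 hγ1, vecMul_smul, smul_smul,
      div_mul_cancel₀ γ hγ.ne']
  calc ∑ s, |dVisit P γ ρ0 pol' s - d s|
      = γ / (1 - γ) * ∑ s, |(x ᵥ* N) s| := by
        simp only [← Pi.sub_apply (dVisit P γ ρ0 pol'), hdiff, Pi.smul_apply, smul_eq_mul,
          abs_mul, abs_of_nonneg (div_nonneg hγ0 hγ.le), Finset.mul_sum]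
    _ ≤ γ / (1 - γ) * ∑ s, |x s| :=
        mul_le_mul_of_nonneg_left (sum_abs_vecMul_le_of_mem_rowStochastic hN x)
          (div_nonneg hγ0 hγ.le)
    _ ≤ γ / (1 - γ) * ∑ s, d s * ∑ a, |pol' s a - pol s a| := by
        refine mul_le_mul_of_nonneg_left ?_ (div_nonneg hγ0 hγ.le)
        refine (sum_abs_vecMul_le _ _).trans (Finset.sum_le_sum fun s _ => ?_)
        rw [abs_of_nonneg ((dVisit_mem_stdSimplex hP hpol hγ0 hγ1 hρ).1 s)]
        exact mul_le_mul_of_nonneg_left (sum_abs_transMat_sub_le hP s)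
          ((dVisit_mem_stdSimplex hP hpol hγ0 hγ1 hρ).1 s)

lemma abs_le_epsAdv [Nonempty S] (F : S → A → ℝ) (s : S) :
    |policyAvg (Adv P γ F pol) pol' s| ≤ epsAdv P γ F pol pol' :=
  Finset.le_sup' (fun s => |∑ a, pol' s a * Adv P γ F pol s a|) (Finset.mem_univ s)

theorem Jret_sub_Jret_ge [Nonempty S] (hP : ∀ s a, P s a ∈ stdSimplex ℝ S)
    (hpol : ∀ s, pol s ∈ stdSimplex ℝ A) (hpol' : ∀ s, pol' s ∈ stdSimplex ℝ A)
    (habs : ∀ s a, pol s a = 0 → pol' s a = 0) (hγ0 : 0 ≤ γ) (hγ1 : γ < 1)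
    {ρ0 : S → ℝ} (hρ : ρ0 ∈ stdSimplex ℝ S) {δ : ℝ} (R : S → A → ℝ)
    (hKL : avgKL P γ ρ0 pol' pol ≤ δ) (hA : 0 ≤ surrAdv P γ ρ0 R pol pol') :
    -(√(2 * δ) * γ / (1 - γ) ^ 2) * epsAdv P γ R pol pol' ≤
      Jret P γ ρ0 R pol' - Jret P γ ρ0 R pol := by
  have hγ : 0 < 1 - γ := sub_pos.2 hγ1
  set d := dVisit P γ ρ0 pol
  set d' := dVisit P γ ρ0 pol'
  set g := policyAvg (Adv P γ R pol) pol'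
  set ε := epsAdv P γ R pol pol'
  have hε : 0 ≤ ε := (abs_nonneg _).trans (abs_le_epsAdv R (Classical.arbitrary S))
  have hd := dVisit_mem_stdSimplex hP hpol hγ0 hγ1 hρ
  have htv : ∑ s, |d' s - d s| ≤ γ / (1 - γ) * √(2 * δ) := by
    refine (sum_abs_dVisit_sub_le hP hpol hpol' hγ0 hγ1 hρ).trans ?_
    refine mul_le_mul_of_nonneg_left ?_ (div_nonneg hγ0 hγ.le)
    refine (sum_mul_sum_abs_sub_le_sqrt hd hpol hpol' habs).trans (Real.sqrt_le_sqrt ?_)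
    exact mul_le_mul_of_nonneg_left hKL zero_le_two
  have hshift : -(ε * ∑ s, |d' s - d s|) ≤ (d' - d) ⬝ᵥ g := by
    refine neg_le_of_abs_le ((Finset.abs_sum_le_sum_abs _ _).trans ?_)
    rw [Finset.mul_sum]
    refine Finset.sum_le_sum fun s _ => ?_
    rw [abs_mul, mul_comm ε]
    exact mul_le_mul_of_nonneg_left (abs_le_epsAdv R s) (abs_nonneg _)
  have hsplit : (1 - γ) * (Jret P γ ρ0 R pol' - Jret P γ ρ0 R pol) =
      surrAdv P γ ρ0 R pol pol' + (d' - d) ⬝ᵥ g := by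
    have hsurr : surrAdv P γ ρ0 R pol pol' = d ⬝ᵥ g := rfl
    rw [performance_difference hP hpol' hγ0 hγ1, hsurr, sub_dotProduct]
    ring
  have hmain : -(ε * (γ / (1 - γ) * √(2 * δ))) ≤
      (1 - γ) * (Jret P γ ρ0 R pol' - Jret P γ ρ0 R pol) := by
    rw [hsplit]
    linarith [mul_le_mul_of_nonneg_left htv hε]
  calc -(√(2 * δ) * γ / (1 - γ) ^ 2) * ε
      = -(ε * (γ / (1 - γ) * √(2 * δ))) / (1 - γ) := by field_simp
    _ ≤ Jret P γ ρ0 R pol' - Jret P γ ρ0 R pol := (div_le_iff₀' hγ).2 hmain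

end MDP

theorem max_reward_stage_bound_general {S A : Type*} [Fintype S] [DecidableEq S] [Fintype A] [Nonempty S]
    (P : S → A → S → ℝ) (hP0 : ∀ s a s', 0 ≤ P s a s') (hP1 : ∀ s a, ∑ s', P s a s' = 1)
    (γ : ℝ) (hγ0 : 0 < γ) (hγ1 : γ < 1)
    (ρ0 : S → ℝ) (hρ0 : ∀ s, 0 ≤ ρ0 s) (hρ1 : ∑ s, ρ0 s = 1)
    (δ : ℝ) (R : S → A → ℝ) (n : ℕ)
    (pol : ℕ → S → A → ℝ)
    (hpol0 : ∀ i ≤ n, ∀ s a, 0 ≤ pol i s a)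
    (hpol1 : ∀ i ≤ n, ∀ s, ∑ a, pol i s a = 1)
    (habs : ∀ i < n, ∀ s a, pol i s a = 0 → pol (i + 1) s a = 0)
    (hKL : ∀ i < n, avgKL P γ ρ0 (pol (i + 1)) (pol i) ≤ δ)
    (hA : ∀ i < n, 0 ≤ surrAdv P γ ρ0 R (pol i) (pol (i + 1))) :
    Jret P γ ρ0 R (pol n) - Jret P γ ρ0 R (pol 0) ≥
      - (Real.sqrt (2 * δ) * γ / (1 - γ) ^ 2) *
          ∑ j ∈ Finset.range n, epsAdv P γ R (pol j) (pol (j + 1)) := by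
  have hP : ∀ s a, P s a ∈ stdSimplex ℝ S := fun s a => ⟨hP0 s a, hP1 s a⟩
  have hpol : ∀ i ≤ n, ∀ s, pol i s ∈ stdSimplex ℝ A :=
    fun i hi s => ⟨hpol0 i hi s, hpol1 i hi s⟩
  rw [← Finset.sum_range_sub (fun i => Jret P γ ρ0 R (pol i)), Finset.mul_sum, ge_iff_le]
  refine Finset.sum_le_sum fun i hi => ?_
  have hi : i < n := Finset.mem_range.1 hi
  exact Jret_sub_Jret_ge hP (hpol i hi.le) (hpol (i + 1) hi) (habs i hi) hγ0.le hγ1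
    ⟨hρ0, hρ1⟩ R (hKL i hi) (hA i hi)

/-- max-reward stage cumulative bound (Lemma A.2). -/
theorem max_reward_stage_bound {S A : Type*} [Fintype S] [DecidableEq S] [Fintype A] [Nonempty S] [Nonempty A]
    (P : S → A → S → ℝ) (hP0 : ∀ s a s', 0 ≤ P s a s') (hP1 : ∀ s a, ∑ s', P s a s' = 1)
    (γ : ℝ) (hγ0 : 0 < γ) (hγ1 : γ < 1)
    (ρ0 : S → ℝ) (hρ0 : ∀ s, 0 ≤ ρ0 s) (hρ1 : ∑ s, ρ0 s = 1)
    (δ : ℝ) (hδ : 0 < δ) (R : S → A → ℝ) (n : ℕ)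
    (pol : ℕ → S → A → ℝ)
    (hpol0 : ∀ i ≤ n, ∀ s a, 0 ≤ pol i s a)
    (hpol1 : ∀ i ≤ n, ∀ s, ∑ a, pol i s a = 1)
    (habs : ∀ i < n, ∀ s a, pol i s a = 0 → pol (i + 1) s a = 0)
    (hKL : ∀ i < n, avgKL P γ ρ0 (pol (i + 1)) (pol i) ≤ δ)
    (hA : ∀ i < n, 0 ≤ surrAdv P γ ρ0 R (pol i) (pol (i + 1))) :
    Jret P γ ρ0 R (pol n) - Jret P γ ρ0 R (pol 0) ≥
      - (Real.sqrt (2 * δ) * γ / (1 - γ) ^ 2) *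
          ∑ j ∈ Finset.range n, epsAdv P γ R (pol j) (pol (j + 1)) :=
  max_reward_stage_bound_general P hP0 hP1 γ hγ0 hγ1 ρ0 hρ0 hρ1 δ R n pol hpol0 hpol1 habs hKL hA
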